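/- arXiv:1411.3711 — 11 statements merged into one kernel-verified Lean document; each statement's English description precedes it below -/
import Mathlib

section
/- Let i and k be coprime integers with i > 1 and k > 1, and set p = i·k + 1. For every integer m with 0 < m < k, if n is the unique integer with 0 ≤ n < p and −m·i² ≡ n (mod p), then i ≤ n. -/
/-!
Divide `m * i` by `k`: `m * i = k * q + r` with `0 ≤ q < i` and, by coprimality, `0 < r < k`.
Since `i * k ≡ -1 (mod i * k + 1)`, we get `-m * i² = -(k * q + r) * i ≡ q - r * i`, so the
residue is `n = i * k + 1 + q - r * i ≥ i * k + 1 - (k - 1) * i = i + 1`.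
-/

namespace Int

theorem emod_ne_zero_of_isCoprime {i k m : ℤ} (hcop : IsCoprime i k) (hm0 : 0 < m)
    (hmk : m < k) : m * i % k ≠ 0 := by
  intro hdvd
  have hkm : k ∣ m := hcop.symm.dvd_of_dvd_mul_right (Int.dvd_of_emod_eq_zero hdvd)
  exact absurd (Int.le_of_dvd hm0 hkm) (not_le.mpr hmk)

theorem neg_mul_sq_modEq_ediv_sub_emod_mul (i k m : ℤ) :
    -m * i ^ 2 ≡ m * i / k - m * i % k * i [ZMOD i * k + 1] := by
  have hdiv := Int.mul_ediv_add_emod (m * i) k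
  refine Int.modEq_iff_dvd.mpr ⟨m * i / k, ?_⟩
  linear_combination (-i) * hdiv

end Int

theorem stmt_0_general (i k p m n : ℤ) (hcop : IsCoprime i k) (hi : 1 < i)
    (hp : p = i * k + 1) (hm0 : 0 < m) (hmk : m < k) (hn0 : 0 ≤ n) (hnp : n < p)
    (hcong : -m * i ^ 2 ≡ n [ZMOD p]) : i ≤ n := by
  set q := m * i / k
  set r := m * i % k
  have hk0 : 0 < k := hm0.trans hmk
  have hr : 0 < r ∧ r < k :=
    ⟨lt_of_le_of_ne (Int.emod_nonneg _ hk0.ne') (Int.emod_ne_zero_of_isCoprime hcop hm0 hmk).symm,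
      Int.emod_lt_of_pos _ hk0⟩
  have hq : 0 ≤ q ∧ q < i :=
    ⟨Int.ediv_nonneg (by positivity) hk0.le, Int.ediv_lt_of_lt_mul hk0 (by nlinarith)⟩
  have hres : n ≡ p + (q - r * i) [ZMOD p] := by
    subst hp
    exact hcong.symm.trans <| (Int.neg_mul_sq_modEq_ediv_sub_emod_mul i k m).trans
      Int.add_modEq_left.symm
  have hlo : 0 ≤ p + (q - r * i) := by nlinarith
  have hhi : p + (q - r * i) < p := by nlinarith
  have hn : n = p + (q - r * i) := by
    rwa [Int.ModEq, Int.emod_eq_of_lt hn0 hnp, Int.emod_eq_of_lt hlo hhi] at hres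
  nlinarith

/-- Let `i` and `k` be coprime integers with `i > 1` and `k > 1`, and set `p = i*k + 1`.
For every integer `m` with `0 < m < k`, if `n` satisfies `0 ≤ n < p` and
`-m*i² ≡ n (mod p)`, then `i ≤ n`. -/
theorem stmt_0 (i k p m n : ℤ) (hcop : IsCoprime i k) (hi : 1 < i) (hk : 1 < k)
    (hp : p = i * k + 1) (hm0 : 0 < m) (hmk : m < k) (hn0 : 0 ≤ n) (hnp : n < p)
    (hcong : -m * i ^ 2 ≡ n [ZMOD p]) : i ≤ n :=
  stmt_0_general i k p m n hcop hi hp hm0 hmk hn0 hnp hcong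
end

section
/- Let a and p be integers with 0 < a < p. Then there exist integers r, s with gcd(r,s) = 1, p = r² + r·s + s², and a·s² ≡ r² (mod p), if and only if a² + a + 1 ≡ 0 (mod p). -/
/-!
Write `ω` for a primitive cube root of unity, so that `r² + rs + s² = N(r - sω)`.
If `p = r² + rs + s²` with `r, s` coprime, then `s` is a unit modulo `p` and `x = r/s` is a root of
`x² + x + 1`; the condition `a ≡ x²` then gives `a² + a + 1 ≡ x⁴ + x² + 1 = (x² + x + 1)(x² - x + 1) ≡ 0`.
Conversely, if `p ∣ a² + a + 1`, then `c = -1 - a` is a root of `x² + x + 1` modulo `p` with `c² ≡ a`, and a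
descent on `p` (Lagrange's reduction for the form `x² + xy + y²`) produces a proper representation
`p = r² + rs + s²` with `r ≡ c s`.
-/

/-- `p` is properly represented by `x² + xy + y²` at a pair `(r, s)` with `r / s ≡ c (mod p)`. -/
def IsEisensteinRep (p c : ℤ) : Prop :=
  ∃ r s : ℤ, IsCoprime r s ∧ p = r ^ 2 + r * s + s ^ 2 ∧ r ≡ c * s [ZMOD p]

theorem IsEisensteinRep.of_modEq {p c c' : ℤ} (hc : c ≡ c' [ZMOD p])
    (h : IsEisensteinRep p c') : IsEisensteinRep p c := by
  obtain ⟨r, s, hrs, hp, hr⟩ := h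
  exact ⟨r, s, hrs, hp, hr.trans (hc.symm.mul_right s)⟩

/-- Descent step: `pq = N(c - ω)` and `q = N(e - fω)` with `e ≡ cf (mod q)`, so `e - fω` divides
`c - ω` in `ℤ[ω]`, and the quotient is `r + tω` with `p = N(r + tω)`. -/
theorem IsEisensteinRep.of_mul {p q c : ℤ} (hq : q ≠ 0) (hpq : c ^ 2 + c + 1 = p * q)
    (h : IsEisensteinRep q c) : IsEisensteinRep p c := by
  obtain ⟨e, f, -, hqef, hmod⟩ := h
  obtain ⟨t, ht⟩ := hmod.dvd
  obtain ⟨r, hr⟩ : q ∣ c * e + c * f + f :=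
    ⟨-c * t + f * p, by linear_combination (-c) * ht + f * hpq⟩
  have hcop : f * r - (e + f) * t = 1 :=
    mul_left_cancel₀ hq (by linear_combination (-1) * hqef - f * hr + (e + f) * ht)
  have hform : p = r ^ 2 - r * t + t ^ 2 :=
    (mul_left_cancel₀ (pow_ne_zero 2 hq) (by
      linear_combination q * hpq - (c ^ 2 + c + 1) * hqef +
        (-(c * e + c * f + f + q * r) + q * t) * hr +
        ((c * e + c * f + f) - ((c * f - e) + q * t)) * ht)).symm
  have hlin : r + c * t = f * p :=
    mul_left_cancel₀ hq (by linear_combination f * hpq - hr - c * ht)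
  refine ⟨r, -t, ⟨f, e + f, by linear_combination hcop⟩, by rw [hform]; ring, ?_⟩
  exact Int.modEq_iff_dvd.mpr ⟨-f, by linear_combination -hlin⟩

theorem Int.exists_modEq_neg_le_two_mul_le (c : ℤ) {p : ℤ} (hp : 0 < p) :
    ∃ c', c' ≡ c [ZMOD p] ∧ -p ≤ 2 * c' ∧ 2 * c' ≤ p := by
  lift p to ℕ using hp.le
  have hp' : 0 < p := by exact_mod_cast hp
  refine ⟨c.bmod p, Int.bmod_emod, ?_, ?_⟩
  · have := Int.le_bmod (x := c) hp'
    omega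
  · have := Int.bmod_lt (x := c) hp'
    omega

theorem pos_of_sq_add_add_one_eq_mul {p q c : ℤ} (hp : 0 < p) (hpq : c ^ 2 + c + 1 = p * q) :
    0 < q :=
  pos_of_mul_pos_right (hpq ▸ by nlinarith [sq_nonneg (2 * c + 1)]) hp.le

theorem lt_of_sq_add_add_one_eq_mul {p q c : ℤ} (hp : 2 ≤ p) (hc : -p ≤ 2 * c ∧ 2 * c ≤ p)
    (hpq : c ^ 2 + c + 1 = p * q) : q < p := by
  nlinarith [sq_le_sq' hc.1 hc.2]

theorem isEisensteinRep_of_dvd {p c : ℤ} (hp : 0 < p) (hpc : p ∣ c ^ 2 + c + 1) :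
    IsEisensteinRep p c := by
  induction hn : p.toNat using Nat.strong_induction_on generalizing p c with
  | _ n ih =>
  obtain rfl | hp2 : p = 1 ∨ 2 ≤ p := by omega
  · exact ⟨1, 0, isCoprime_one_left, by ring, Int.modEq_one⟩
  obtain ⟨c', hc', hc'p⟩ := Int.exists_modEq_neg_le_two_mul_le c hp
  have hpc' : c' ^ 2 + c' + 1 ≡ 0 [ZMOD p] :=
    (((hc'.pow 2).add hc').add_right 1).trans (Int.modEq_zero_iff_dvd.mpr hpc)
  obtain ⟨q, hq⟩ := Int.modEq_zero_iff_dvd.mp hpc'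
  have hq0 := pos_of_sq_add_add_one_eq_mul hp hq
  have hqp := lt_of_sq_add_add_one_eq_mul hp2 hc'p hq
  have hrep : IsEisensteinRep q c' :=
    ih q.toNat (by omega) hq0 (Dvd.intro_left p hq.symm) rfl
  exact (hrep.of_mul hq0.ne' hq).of_modEq hc'.symm

theorem dvd_sq_add_add_one_of_modEq {p a r s : ℤ} (hrs : IsCoprime r s)
    (hp : p = r ^ 2 + r * s + s ^ 2) (ha : a * s ^ 2 ≡ r ^ 2 [ZMOD p]) :
    p ∣ a ^ 2 + a + 1 := by
  have hps : IsCoprime p s := by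
    rw [hp, show r ^ 2 + r * s + s ^ 2 = r * r + s * (r + s) by ring]
    exact (hrs.mul_left hrs).add_mul_left_left (r + s)
  obtain ⟨k, hk⟩ := ha.dvd
  refine (hps.pow_right (n := 4)).dvd_of_dvd_mul_left
    ⟨-k * (a * s ^ 2 + r ^ 2 + s ^ 2) + (r ^ 2 - r * s + s ^ 2), ?_⟩
  linear_combination -(a * s ^ 2 + r ^ 2 + s ^ 2) * hk - (r ^ 2 - r * s + s ^ 2) * hp

/-- Let `a, p` be integers with `0 < a < p`. There exist integers `r, s` with
`gcd(r,s) = 1`, `p = r² + rs + s²`, and `a·s² ≡ r² (mod p)`, if and only if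
`a² + a + 1 ≡ 0 (mod p)`. -/
theorem stmt_1 (a p : ℤ) (ha : 0 < a) (hap : a < p) :
    (∃ r s : ℤ, IsCoprime r s ∧ p = r ^ 2 + r * s + s ^ 2 ∧
      a * s ^ 2 ≡ r ^ 2 [ZMOD p]) ↔ a ^ 2 + a + 1 ≡ 0 [ZMOD p] := by
  rw [Int.modEq_zero_iff_dvd]
  refine ⟨fun ⟨r, s, hrs, hp, hmod⟩ ↦ dvd_sq_add_add_one_of_modEq hrs hp hmod, fun hpa ↦ ?_⟩
  obtain ⟨r, s, hrs, hp, hr⟩ :=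
    isEisensteinRep_of_dvd (p := p) (c := -1 - a) (by omega) (by convert hpa using 1; ring)
  refine ⟨r, s, hrs, hp, ?_⟩
  calc a * s ^ 2 ≡ a * s ^ 2 + (a ^ 2 + a + 1) * s ^ 2 [ZMOD p] :=
        Int.modEq_iff_dvd.mpr (by simpa using hpa.mul_right (s ^ 2))
    _ = ((-1 - a) * s) ^ 2 := by ring
    _ ≡ r ^ 2 [ZMOD p] := (hr.pow 2).symm
end

section
/- Let r and s be coprime positive integers, set p = r² + r·s + s², and let a be an integer with 0 < a < p and a·s² ≡ r² (mod p). If 2a² ≡ −2(r + s) (mod p), then r = 1. -/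
/-!
Eliminating `a` between the two congruences gives `r⁴ + (r + s)s⁴ ≡ 0` up to a factor `2`, and
reducing with `r² ≡ -rs - s²` turns this into `p ∣ 2r²s(r + s)(r - 1)`. Since `gcd(r, s) = 1`,
the modulus `p` is odd and coprime to `r`, `s` and `r + s`, so `p ∣ r - 1`; as `0 ≤ r - 1 < p`,
this forces `r = 1`.
-/

namespace Int

variable {r s : ℤ}

theorem odd_sq_add_mul_add_sq (h : IsCoprime r s) : Odd (r ^ 2 + r * s + s ^ 2) := by
  have hnot_even : ¬(Even r ∧ Even s) := fun ⟨⟨x, hx⟩, ⟨y, hy⟩⟩ => by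
    have := h.isUnit_of_dvd' (x := 2) ⟨x, by omega⟩ ⟨y, by omega⟩
    norm_num [Int.isUnit_iff] at this
  rw [← Int.not_even_iff_odd]
  simp only [parity_simps]
  tauto

theorem isCoprime_sq_add_mul_add_sq_left (h : IsCoprime r s) :
    IsCoprime (r ^ 2 + r * s + s ^ 2) r := by
  have hp : r ^ 2 + r * s + s ^ 2 = s ^ 2 + r * (r + s) := by ring
  rw [hp, IsCoprime.add_mul_left_left_iff, IsCoprime.pow_left_iff two_pos]
  exact h.symm

theorem isCoprime_sq_add_mul_add_sq_right (h : IsCoprime r s) :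
    IsCoprime (r ^ 2 + r * s + s ^ 2) s := by
  have hp : r ^ 2 + r * s + s ^ 2 = s ^ 2 + s * r + r ^ 2 := by ring
  rw [hp]
  exact isCoprime_sq_add_mul_add_sq_left h.symm

theorem isCoprime_sq_add_mul_add_sq_add (h : IsCoprime r s) :
    IsCoprime (r ^ 2 + r * s + s ^ 2) (r + s) := by
  have hr : IsCoprime r (r + s) := by
    simpa only [mul_one, add_comm] using h.add_mul_left_right 1
  have hs : IsCoprime s (r + s) := by
    simpa only [mul_one] using h.symm.add_mul_left_right 1
  have hrs : IsCoprime (r * s) (r + s) := hr.mul_left hs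
  have hp : r ^ 2 + r * s + s ^ 2 = -(r * s) + (r + s) * (r + s) := by ring
  rw [hp, IsCoprime.add_mul_left_left_iff]
  exact hrs.neg_left

theorem isCoprime_sq_add_mul_add_sq_mul (h : IsCoprime r s) :
    IsCoprime (r ^ 2 + r * s + s ^ 2) (2 * r ^ 2 * s * (r + s)) :=
  ((((isCoprime_two_right.mpr (odd_sq_add_mul_add_sq h)).mul_right
    (isCoprime_sq_add_mul_add_sq_left h).pow_right).mul_right
    (isCoprime_sq_add_mul_add_sq_right h)).mul_right (isCoprime_sq_add_mul_add_sq_add h))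

theorem sq_add_mul_add_sq_dvd_of_modEq {a : ℤ}
    (ha : a * s ^ 2 ≡ r ^ 2 [ZMOD r ^ 2 + r * s + s ^ 2])
    (hsharp : 2 * a ^ 2 ≡ -2 * (r + s) [ZMOD r ^ 2 + r * s + s ^ 2]) :
    r ^ 2 + r * s + s ^ 2 ∣ 2 * r ^ 2 * s * (r + s) * (r - 1) := by
  obtain ⟨k, hk⟩ := ha.dvd
  obtain ⟨l, hl⟩ := hsharp.dvd
  exact ⟨2 * k * (r ^ 2 + a * s ^ 2) - s ^ 4 * l - 2 * (s ^ 3 - r ^ 2 * s + r ^ 2),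
    by linear_combination 2 * (r ^ 2 + a * s ^ 2) * hk - s ^ 4 * hl⟩

theorem sub_one_lt_sq_add_mul_add_sq (r s : ℤ) : r - 1 < r ^ 2 + r * s + s ^ 2 := by
  nlinarith [sq_nonneg (r + 2 * s), sq_nonneg (3 * r - 2)]

end Int

theorem stmt_3_general (r s p a : ℤ) (hcop : IsCoprime r s) (hr : 0 < r)
    (hp : p = r ^ 2 + r * s + s ^ 2)
    (ha : a * s ^ 2 ≡ r ^ 2 [ZMOD p])
    (hsharp : 2 * a ^ 2 ≡ -2 * (r + s) [ZMOD p]) : r = 1 := by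
  subst hp
  have hdvd : r ^ 2 + r * s + s ^ 2 ∣ r - 1 :=
    (Int.isCoprime_sq_add_mul_add_sq_mul hcop).dvd_of_dvd_mul_left
      (Int.sq_add_mul_add_sq_dvd_of_modEq ha hsharp)
  have hzero : r - 1 = 0 :=
    Int.eq_zero_of_dvd_of_nonneg_of_lt (by omega) (Int.sub_one_lt_sq_add_mul_add_sq r s) hdvd
  omega

/-- Let `r, s` be coprime positive integers, `p = r² + rs + s²`, and `a` with
`0 < a < p` and `a·s² ≡ r² (mod p)`. If `2a² ≡ −2(r+s) (mod p)`, then `r = 1`. -/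
theorem stmt_3 (r s p a : ℤ) (hcop : IsCoprime r s) (hr : 0 < r) (hs : 0 < s)
    (hp : p = r ^ 2 + r * s + s ^ 2) (ha0 : 0 < a) (hap : a < p)
    (ha : a * s ^ 2 ≡ r ^ 2 [ZMOD p])
    (hsharp : 2 * a ^ 2 ≡ -2 * (r + s) [ZMOD p]) : r = 1 :=
  stmt_3_general r s p a hcop hr hp ha hsharp
end

section
/- Let a and b be coprime positive integers, set n = b² − a·b − a², and suppose |n| ≠ 1. Then there exist coprime integers c and d with c > d > 0, c² + c·d − d² = |n|, and c·b ≡ a·d (mod n). -/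
/-!
Write `N(x, y) = x² + xy − y²` and `r ≡ a/b (mod n)`, so that `r² + r − 1 ≡ 0`. The map
`(p, q) ↦ (q − p, p)` changes the sign of `N` and preserves `p/q ≡ r`, since
`(q − p)/p = 1/r − 1 = r`. Starting from `(a, b)`, where `N(a, b) = −n`, apply it while `p < q`;
`q` strictly decreases, and `p = q` is impossible because it forces `p = q = 1` and `|n| = 1`.
The descent therefore stops at a coprime pair `c > d > 0`, where `N(c, d) > 0` gives `N(c, d) = |n|`.
-/

/-- The norm of `x + yφ` in `ℤ[φ]`, `φ` the golden ratio. -/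
def goldenNorm (x y : ℤ) : ℤ := x ^ 2 + x * y - y ^ 2

lemma goldenNorm_sub_swap (p q : ℤ) : goldenNorm (q - p) p = -goldenNorm p q := by
  unfold goldenNorm; ring

lemma goldenNorm_pos_of_lt {p q : ℤ} (hq : 0 < q) (hqp : q < p) : 0 < goldenNorm p q := by
  unfold goldenNorm; nlinarith

lemma IsCoprime.sub_left_self {a b : ℤ} (h : IsCoprime a b) : IsCoprime (b - a) a := by
  simpa using (IsCoprime.sub_mul_left_left_iff (z := 1)).mpr h.symm

lemma IsCoprime.sub_goldenNorm {a b : ℤ} (h : IsCoprime a b) :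
    IsCoprime (b - a) (goldenNorm a b) := by
  have : goldenNorm a b = a ^ 2 - (b - a) * b := by unfold goldenNorm; ring
  rw [this, IsCoprime.sub_mul_left_right_iff]
  exact h.sub_left_self.pow_right

lemma modEq_sub_of_modEq {a b n p q : ℤ} (hn : n ∣ goldenNorm a b) (hba : IsCoprime (b - a) n)
    (h : p * b ≡ a * q [ZMOD n]) : (q - p) * b ≡ a * p [ZMOD n] := by
  rw [Int.modEq_iff_dvd] at h ⊢
  apply hba.symm.dvd_of_dvd_mul_left
  have key : (b - a) * (a * p - (q - p) * b)
      = (q - p) * goldenNorm a b - a * (a * q - p * b) := by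
    unfold goldenNorm; ring
  rw [key]
  exact dvd_sub (hn.mul_left _) (h.mul_left _)

theorem exists_goldenNorm_eq_abs_of_modEq {a b n : ℤ} (hn : n ∣ goldenNorm a b)
    (hba : IsCoprime (b - a) n) (hn1 : |n| ≠ 1) (p q : ℤ) (hp : 0 < p) (hq : 0 < q)
    (hpq : IsCoprime p q) (hN : |goldenNorm p q| = |n|) (hmod : p * b ≡ a * q [ZMOD n]) :
    ∃ c d : ℤ, IsCoprime c d ∧ d < c ∧ 0 < d ∧ goldenNorm c d = |n| ∧
      c * b ≡ a * d [ZMOD n] := by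
  rcases lt_trichotomy p q with hlt | rfl | hgt
  · refine exists_goldenNorm_eq_abs_of_modEq hn hba hn1 (q - p) p (by omega) hp ?_ ?_
      (modEq_sub_of_modEq hn hba hmod)
    · exact hpq.sub_left_self
    · rw [goldenNorm_sub_swap, abs_neg, hN]
  · have hp1 : p = 1 := by
      rcases Int.isUnit_iff.mp (isCoprime_self.mp hpq) with h | h <;> omega
    subst hp1
    exact absurd (by simpa [goldenNorm] using hN.symm) hn1
  · exact ⟨p, q, hpq, hgt, hq, (abs_of_pos (goldenNorm_pos_of_lt hq hgt)) ▸ hN, hmod⟩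
termination_by q.toNat
decreasing_by omega

/-- Let `a, b` be coprime positive integers, `n = b² − ab − a²`, `|n| ≠ 1`. Then
there exist coprime integers `c > d > 0` with `c² + cd − d² = |n|` and
`c·b ≡ a·d (mod n)`. -/
theorem stmt_4 (a b n : ℤ) (hcop : IsCoprime a b) (ha : 0 < a) (hb : 0 < b)
    (hn : n = b ^ 2 - a * b - a ^ 2) (hn1 : |n| ≠ 1) :
    ∃ c d : ℤ, IsCoprime c d ∧ d < c ∧ 0 < d ∧ c ^ 2 + c * d - d ^ 2 = |n| ∧
      c * b ≡ a * d [ZMOD n] := by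
  have hN : goldenNorm a b = -n := by rw [hn, goldenNorm]; ring
  have hba : IsCoprime (b - a) n := by
    simpa [hN, IsCoprime.neg_right_iff] using hcop.sub_goldenNorm
  exact exists_goldenNorm_eq_abs_of_modEq (by simp [hN]) hba hn1 a b ha hb hcop
    (by rw [hN, abs_neg]) (by rw [mul_comm])
end

section
/- Define Γ : ℤ × ℤ → ℤ × ℤ by Γ(x,y) = (y − x, x), and for integers a, b let (aᵢ, bᵢ) = Γⁱ(a,b) (the i-th iterate applied to (a,b)). Then for every integer i ≥ 0, aᵢ = (−1)ⁱ·(F(i+1)·a − F(i)·b), where F denotes the Fibonacci sequence with F(0) = 0 and F(1) = 1. -/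
/-! Γ acts on consecutive pairs of the sequence `uₙ = (-1)ⁿ (F(n+1) a - F(n) b)`, which satisfies
`uₙ₊₂ = uₙ - uₙ₊₁` (the Fibonacci recurrence twisted by the sign `(-1)ⁿ`). Hence Γ shifts
`(uₙ₊₁, uₙ)` to `(uₙ₊₂, uₙ₊₁)`, and `Γⁱ(a, b) = (uᵢ, uᵢ₋₁)` for `i ≥ 1`. -/

variable {R : Type*} [CommRing R]

def signedFibComb (a b : R) (n : ℕ) : R :=
  (-1) ^ n * ((Nat.fib (n + 1) : R) * a - (Nat.fib n : R) * b)

theorem signedFibComb_add_two (a b : R) (n : ℕ) :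
    signedFibComb a b (n + 2) = signedFibComb a b n - signedFibComb a b (n + 1) := by
  simp only [signedFibComb, pow_succ, Nat.fib_add_two, Nat.cast_add]
  ring

theorem iterate_succ_eq_signedFibComb (Γ : R × R → R × R) (hΓ : ∀ x y : R, Γ (x, y) = (y - x, x))
    (a b : R) (n : ℕ) :
    Γ^[n + 1] (a, b) = (signedFibComb a b (n + 1), signedFibComb a b n) := by
  induction n with
  | zero => simp [hΓ, signedFibComb]
  | succ n ih =>
    rw [Function.iterate_succ_apply', ih, hΓ, ← signedFibComb_add_two]

/-- Define `Γ(x,y) = (y − x, x)` and let `(aᵢ, bᵢ) = Γⁱ(a,b)`. Then for every `i ≥ 0`,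
`aᵢ = (−1)ⁱ·(F(i+1)·a − F(i)·b)` where `F` is the Fibonacci sequence with
`F(0) = 0`, `F(1) = 1`. -/
theorem stmt_5 (Γ : ℤ × ℤ → ℤ × ℤ) (hΓ : ∀ x y : ℤ, Γ (x, y) = (y - x, x))
    (a b : ℤ) (i : ℕ) :
    (Γ^[i] (a, b)).1 = (-1) ^ i * ((Nat.fib (i + 1) : ℤ) * a - (Nat.fib i : ℤ) * b) := by
  cases i with
  | zero => simp
  | succ n => rw [iterate_succ_eq_signedFibComb Γ hΓ]; rfl
end

section
/- Let c ∈ {1, 2}, let A, B, t be integers with A ≥ 2, B ≥ (c+1)·A − 1, and t ≤ −1, let δ ∈ {1, −1}, and set p = |c·A·B + t·B² + δ·A|. Then p ≥ |t+1|·B² + B − A. -/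
/-! Since `B ≥ c·A + 1`, the term `t·B²` with `t ≤ -1` outweighs `c·A·B + δ·A`, so the expression
inside the absolute value is nonpositive and `p = -(c·A·B + t·B² + δ·A)`. The claimed bound then
reduces to `B·(B - c·A - 1) + (1 - δ)·A ≥ 0`. -/

section SurgeryCoeff

variable {R : Type*} [CommRing R] [LinearOrder R] [IsStrictOrderedRing R]

def surgeryCoeff (c A B t δ : R) : R := c * A * B + t * B ^ 2 + δ * A

variable {c A B t δ : R}

theorem surgeryCoeff_nonpos (hA : 0 ≤ A) (hAB : A ≤ B) (hB : c * A + 1 ≤ B) (ht : t ≤ -1)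
    (hδ : δ ≤ 1) : surgeryCoeff c A B t δ ≤ 0 := by
  have hB0 : 0 ≤ B := hA.trans hAB
  calc surgeryCoeff c A B t δ ≤ (B - 1) * B + (-1) * B ^ 2 + 1 * A := by
        unfold surgeryCoeff
        gcongr
        exact le_sub_iff_add_le.mpr hB
    _ = A - B := by ring
    _ ≤ 0 := sub_nonpos.mpr hAB

theorem le_neg_surgeryCoeff (hA : 0 ≤ A) (hB0 : 0 ≤ B) (hB : c * A + 1 ≤ B) (hδ : δ ≤ 1) :
    -(t + 1) * B ^ 2 + B - A ≤ -surgeryCoeff c A B t δ := by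
  have hgap : 0 ≤ B * (B - c * A - 1) + (1 - δ) * A :=
    add_nonneg (mul_nonneg hB0 (by linarith)) (mul_nonneg (sub_nonneg.mpr hδ) hA)
  unfold surgeryCoeff
  linarith

end SurgeryCoeff

/-- Let `c ∈ {1,2}`, `A ≥ 2`, `B ≥ (c+1)·A − 1`, `t ≤ −1`, `δ ∈ {1,−1}`, and
`p = |c·A·B + t·B² + δ·A|`. Then `p ≥ |t+1|·B² + B − A`. -/
theorem stmt_8 (c A B t δ p : ℤ) (hc : c = 1 ∨ c = 2) (hA : 2 ≤ A)
    (hB : (c + 1) * A - 1 ≤ B) (ht : t ≤ -1) (hδ : δ = 1 ∨ δ = -1)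
    (hp : p = |c * A * B + t * B ^ 2 + δ * A|) :
    |t + 1| * B ^ 2 + B - A ≤ p := by
  have hc1 : 1 ≤ c := by omega
  have hδ1 : δ ≤ 1 := by omega
  have hcAB : c * A + 1 ≤ B := by linarith
  have hAB : A ≤ B := by nlinarith
  have hE := surgeryCoeff_nonpos (by omega) hAB hcAB ht hδ1
  rw [hp, abs_of_nonpos (by omega : t + 1 ≤ 0)]
  change _ ≤ |surgeryCoeff c A B t δ|
  rw [abs_of_nonpos hE]
  exact le_neg_surgeryCoeff (by omega) (by omega) hcAB hδ1
end

section
/- Let r and s be coprime integers with r > s > 0, and let m be an integer with (m−1)·s < r < m·s. Then 0 < (2m−1)·r·s − m·(m−1)·s² − r² + s² − 2s < r² + r·s − s² − 2. -/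
/-!
Write `a = r - (m - 1) s` and `b = m s - r`, the distances from `r` to the ends of the interval
`((m - 1) s, m s)`; they are positive and `a + b = s`. Then
`x = (2m - 1) r s - m (m - 1) s² - r² + s² - 2 s = a b + s (s - 2)`, which is positive since
`s ≥ 2`. For the upper bound, `r > s` forces `m ≥ 2`, so `r ≥ s + a`, and together with `b ≤ s`
this gives `r² + r s - s² - 2 - x ≥ 2 a s + a² + 2 s - 2 > 0`.
-/

theorem typeVIII_expr_eq (r s m : ℤ) :
    (2 * m - 1) * r * s - m * (m - 1) * s ^ 2 - r ^ 2 + s ^ 2 - 2 * s =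
      (r - (m - 1) * s) * (m * s - r) + s * (s - 2) := by
  ring

theorem two_le_of_lt_of_lt_mul {r s m : ℤ} (hrs : s < r) (hs : 0 < s) (hm2 : r < m * s) :
    2 ≤ m := by
  by_contra! hm
  have : m * s ≤ 1 * s := mul_le_mul_of_nonneg_right (by omega) hs.le
  linarith

theorem mul_add_mul_sub_two_pos {a b s : ℤ} (ha : 0 < a) (hb : 0 < b) (hs : 2 ≤ s) :
    0 < a * b + s * (s - 2) := by
  have := mul_pos ha hb
  have := mul_nonneg (by omega : (0 : ℤ) ≤ s) (by omega : (0 : ℤ) ≤ s - 2)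
  omega

theorem mul_add_mul_sub_two_lt {a b r s : ℤ} (ha : 0 < a) (hbs : b ≤ s) (hs : 0 < s)
    (hr : s + a ≤ r) :
    a * b + s * (s - 2) < r ^ 2 + r * s - s ^ 2 - 2 := by
  have hab : a * b ≤ a * s := mul_le_mul_of_nonneg_left hbs ha.le
  have hr2 : (s + a) ^ 2 + (s + a) * s ≤ r ^ 2 + r * s := by nlinarith
  nlinarith [mul_pos ha hs]

theorem stmt_11_general (r s m : ℤ) (hrs : s < r) (hs : 0 < s)
    (hm1 : (m - 1) * s < r) (hm2 : r < m * s) :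
    0 < (2 * m - 1) * r * s - m * (m - 1) * s ^ 2 - r ^ 2 + s ^ 2 - 2 * s ∧
      (2 * m - 1) * r * s - m * (m - 1) * s ^ 2 - r ^ 2 + s ^ 2 - 2 * s <
        r ^ 2 + r * s - s ^ 2 - 2 := by
  have hm : 2 ≤ m := two_le_of_lt_of_lt_mul hrs hs hm2
  have hr : s + (r - (m - 1) * s) ≤ r := by
    linarith [mul_nonneg (sub_nonneg.2 hm) hs.le]
  rw [typeVIII_expr_eq]
  exact ⟨mul_add_mul_sub_two_pos (by linarith) (by linarith) (by linarith),
    mul_add_mul_sub_two_lt (by linarith) (by linarith) hs hr⟩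

/-- Let `r, s` be coprime integers with `r > s > 0`, and `m` with
`(m−1)s < r < ms`. Then `0 < (2m−1)rs − m(m−1)s² − r² + s² − 2s < r² + rs − s² − 2`. -/
theorem stmt_11 (r s m : ℤ) (hcop : IsCoprime r s) (hrs : s < r) (hs : 0 < s)
    (hm1 : (m - 1) * s < r) (hm2 : r < m * s) :
    0 < (2 * m - 1) * r * s - m * (m - 1) * s ^ 2 - r ^ 2 + s ^ 2 - 2 * s ∧
      (2 * m - 1) * r * s - m * (m - 1) * s ^ 2 - r ^ 2 + s ^ 2 - 2 * s <
        r ^ 2 + r * s - s ^ 2 - 2 :=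
  stmt_11_general r s m hrs hs hm1 hm2
end

section
/- Let A, B, p be integers with A ≥ 2, let a ∈ {0, 1} and δ ∈ {1, −1}, and suppose B ≥ (3−a)·A − 1 and p ≥ B² + B − A. Then (1 − δ·a)·B + δ·A ≢ 1 (mod p). -/
/-!
Put `N = (1 - δ a) B + δ A`. In each of the four cases `(a, δ)` the number `N - 1` is
`B + A - 1`, `B - A - 1`, `A - 1` or `2B - A - 1`; the lower bound on `B` makes it positive and
the lower bound on `p` makes it smaller than `p`, so `p` cannot divide it.
-/

theorem Int.not_modEq_of_lt_of_sub_lt {x y p : ℤ} (hyx : y < x) (hxy : x - y < p) :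
    ¬ x ≡ y [ZMOD p] := fun h =>
  (sub_ne_zero.2 hyx.ne').elim <|
    Int.eq_zero_of_dvd_of_nonneg_of_lt (sub_nonneg.2 hyx.le) hxy (Int.modEq_iff_dvd.1 h.symm)

section BergeResidue

variable {A B p a δ : ℤ}

theorem one_lt_berge_residue (hA : 2 ≤ A) (ha : a = 0 ∨ a = 1) (hδ : δ = 1 ∨ δ = -1)
    (hB : (3 - a) * A - 1 ≤ B) : 1 < (1 - δ * a) * B + δ * A := by
  rcases ha with rfl | rfl <;> rcases hδ with rfl | rfl <;> linarith

theorem berge_residue_sub_one_lt (hA : 2 ≤ A) (ha : a = 0 ∨ a = 1) (hδ : δ = 1 ∨ δ = -1)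
    (hB : (3 - a) * A - 1 ≤ B) (hp : B ^ 2 + B - A ≤ p) :
    (1 - δ * a) * B + δ * A - 1 < p := by
  rcases ha with rfl | rfl <;> rcases hδ with rfl | rfl <;> nlinarith

end BergeResidue

/-- Let `A ≥ 2`, `a ∈ {0,1}`, `δ ∈ {1,−1}`, `B ≥ (3−a)·A − 1`, and `p ≥ B² + B − A`.
Then `(1 − δ·a)·B + δ·A ≢ 1 (mod p)`. -/
theorem stmt_12 (A B p a δ : ℤ) (hA : 2 ≤ A) (ha : a = 0 ∨ a = 1)
    (hδ : δ = 1 ∨ δ = -1) (hB : (3 - a) * A - 1 ≤ B) (hp : B ^ 2 + B - A ≤ p) :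
    ¬ ((1 - δ * a) * B + δ * A ≡ 1 [ZMOD p]) :=
  Int.not_modEq_of_lt_of_sub_lt (one_lt_berge_residue hA ha hδ hB)
    (berge_residue_sub_one_lt hA ha hδ hB hp)
end

section
/- Let A, B, p be integers with A ≥ 2, let a ∈ {0, 1} and δ ∈ {1, −1}, and suppose B ≥ (3−a)·A − 1, B ≥ 2·A + 1, and p ≥ B² + B − A. Then 2·δ·A·B + (1 − δ·a)·B − δ·A ≢ 1 (mod p). -/
/-!
The integer `1 - (2δAB + (1 - δa)B - δA)` is nonzero and, because `B ≥ 2A + 1` makes `B²`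
dominate `2AB`, smaller in absolute value than `B² + B - A ≤ p`; so `p` cannot divide it.
-/

theorem Int.ModEq.eq_of_abs_sub_lt {m a b : ℤ} (h : a ≡ b [ZMOD m]) (h2 : |b - a| < m) :
    a = b :=
  (sub_eq_zero.mp (Int.eq_zero_of_abs_lt_dvd h.dvd h2)).symm

section

variable {A B a δ : ℤ}

theorem bennequin_ne_one (hA : 2 ≤ A) (ha : a ≤ 1) (hδ : δ = 1 ∨ δ = -1)
    (hB : 2 * A + 1 ≤ B) : 2 * δ * A * B + (1 - δ * a) * B - δ * A ≠ 1 := by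
  rcases hδ with rfl | rfl <;> nlinarith

theorem abs_one_sub_bennequin_lt (hA : 0 ≤ A) (ha₀ : 0 ≤ a) (ha₁ : a ≤ 1)
    (hδ : δ = 1 ∨ δ = -1) (hB : 2 * A + 1 ≤ B) :
    |1 - (2 * δ * A * B + (1 - δ * a) * B - δ * A)| < B ^ 2 + B - A := by
  rw [abs_lt]
  rcases hδ with rfl | rfl <;> constructor <;> nlinarith

end

theorem stmt_13_general (A B p a δ : ℤ) (hA : 2 ≤ A) (ha : a = 0 ∨ a = 1)
    (hδ : δ = 1 ∨ δ = -1) (hB' : 2 * A + 1 ≤ B)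
    (hp : B ^ 2 + B - A ≤ p) :
    ¬ (2 * δ * A * B + (1 - δ * a) * B - δ * A ≡ 1 [ZMOD p]) := by
  have ha₀ : 0 ≤ a := by omega
  have ha₁ : a ≤ 1 := by omega
  intro h
  have hlt := (abs_one_sub_bennequin_lt (by omega) ha₀ ha₁ hδ hB').trans_le hp
  exact bennequin_ne_one hA ha₁ hδ hB' (h.eq_of_abs_sub_lt hlt)

/-- Let `A ≥ 2`, `a ∈ {0,1}`, `δ ∈ {1,−1}`, `B ≥ (3−a)·A − 1`, `B ≥ 2A + 1`, and
`p ≥ B² + B − A`. Then `2·δ·A·B + (1 − δ·a)·B − δ·A ≢ 1 (mod p)`. -/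
theorem stmt_13 (A B p a δ : ℤ) (hA : 2 ≤ A) (ha : a = 0 ∨ a = 1)
    (hδ : δ = 1 ∨ δ = -1) (hB : (3 - a) * A - 1 ≤ B) (hB' : 2 * A + 1 ≤ B)
    (hp : B ^ 2 + B - A ≤ p) :
    ¬ (2 * δ * A * B + (1 - δ * a) * B - δ * A ≡ 1 [ZMOD p]) :=
  stmt_13_general A B p a δ hA ha hδ hB' hp
end

section
/- Let j be an integer with j ≥ 1 or j ≤ −2, let ε ∈ {1, −1}, and set p = 22j² + 9j + 1, a = ε·(11j + 2), and X = 22j² − 1 if j ≥ 1, X = 22j² + 18j + 3 if j ≤ −2. Then 1 − a − a² ≢ X·a (mod p). -/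
/-!
Dividing `X·a − (1 − a − a²)`, a cubic in `j`, by `p = 22j² + 9j + 1` leaves a remainder that is
linear in `j` in each of the four cases (sign of `j`, value of `ε`). That remainder is nonzero and
smaller than `p` in absolute value, so `p` cannot divide the difference.
-/

theorem Int.not_modEq_of_sub_eq_mul_add {p q r x y : ℤ} (h : y - x = p * q + r) (hr₀ : r ≠ 0)
    (hlo : -p < r) (hhi : r < p) : ¬ x ≡ y [ZMOD p] := by
  intro hxy
  have hpr : p ∣ r := (dvd_add_right (dvd_mul_right p q)).mp (h ▸ hxy.dvd)
  exact hr₀ (Int.eq_zero_of_abs_lt_dvd hpr (abs_lt.mpr ⟨hlo, hhi⟩))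

/-- Type IX Berge knots: for `j ≥ 1` or `j ≤ −2`, `ε ∈ {1,−1}`, `p = 22j² + 9j + 1`,
`a = ε·(11j + 2)`, and `X = 22j² − 1` if `j ≥ 1`, `X = 22j² + 18j + 3` if `j ≤ −2`,
we have `1 − a − a² ≢ X·a (mod p)`. -/
theorem stmt_14 (j ε p a X : ℤ) (hj : 1 ≤ j ∨ j ≤ -2) (hε : ε = 1 ∨ ε = -1)
    (hp : p = 22 * j ^ 2 + 9 * j + 1) (ha : a = ε * (11 * j + 2))
    (hX1 : 1 ≤ j → X = 22 * j ^ 2 - 1) (hX2 : j ≤ -2 → X = 22 * j ^ 2 + 18 * j + 3) :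
    ¬ (1 - a - a ^ 2 ≡ X * a [ZMOD p]) := by
  subst hp ha
  rcases hj with hj | hj
  · rw [hX1 hj]
    rcases hε with rfl | rfl
    · exact Int.not_modEq_of_sub_eq_mul_add (q := 11 * j + 3) (r := 6 * j)
        (by ring) (by omega) (by nlinarith) (by nlinarith)
    · exact Int.not_modEq_of_sub_eq_mul_add (q := 8 - 11 * j) (r := -(17 * j + 5))
        (by ring) (by omega) (by nlinarith) (by nlinarith)
  · rw [hX2 hj]
    rcases hε with rfl | rfl
    · exact Int.not_modEq_of_sub_eq_mul_add (q := 11 * j + 12) (r := 5 * j - 1)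
        (by ring) (by omega) (by nlinarith) (by nlinarith)
    · exact Int.not_modEq_of_sub_eq_mul_add (q := -(11 * j) - 1) (r := -16 * j - 4)
        (by ring) (by omega) (by nlinarith) (by nlinarith)
end

section
/- Let i and k be coprime integers with 2 ≤ i < k. If 2k + 2i ≡ 0 (mod i·k + 1), then i = 3 and k = 5. -/
/-! Since `i * k + 1` divides the positive number `2 * (k + i)`, it is at most that number, i.e.
`(i - 2) * (k - 2) ≤ 3`; with `2 ≤ i < k` this leaves `i ∈ {2, 3}`. For `i = 2` the divisibility
reduces to `2 * k + 1 ∣ 3`, which is impossible, and for `i = 3` to `3 * k + 1 ∣ 16`, forcing `k = 5`. -/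

lemma sub_two_mul_sub_two_le_three_of_dvd {i k : ℤ} (hpos : 0 < k + i)
    (hd : i * k + 1 ∣ 2 * k + 2 * i) : (i - 2) * (k - 2) ≤ 3 := by
  have := Int.le_of_dvd (by linarith) hd
  linarith

lemma not_two_mul_add_one_dvd {k : ℤ} (hk : 1 < k) : ¬ 2 * k + 1 ∣ 2 * k + 2 * 2 := by
  intro hd
  have h3 : 2 * k + 1 ∣ 3 := by
    rw [show 2 * k + 2 * 2 = 2 * k + 1 + 3 by ring] at hd
    exact (dvd_add_right (dvd_refl _)).mp hd
  have := Int.le_of_dvd (by norm_num) h3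
  omega

lemma eq_five_of_three_mul_add_one_dvd {k : ℤ} (hk : 3 < k) (hd : 3 * k + 1 ∣ 2 * k + 2 * 3) :
    k = 5 := by
  have h16 : 3 * k + 1 ∣ 16 := by
    rw [show (16 : ℤ) = 3 * (2 * k + 2 * 3) - 2 * (3 * k + 1) by ring]
    exact dvd_sub (hd.mul_left 3) ((dvd_refl _).mul_left 2)
  have hk5 : k ≤ 5 := by linarith [Int.le_of_dvd (by norm_num) h16]
  interval_cases k
  · norm_num at hd
  · rfl

theorem stmt_17_general (i k : ℤ) (hi : 2 ≤ i) (hik : i < k)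
    (h : 2 * k + 2 * i ≡ 0 [ZMOD i * k + 1]) : i = 3 ∧ k = 5 := by
  have hd : i * k + 1 ∣ 2 * k + 2 * i := Int.modEq_zero_iff_dvd.mp h
  have hle := sub_two_mul_sub_two_le_three_of_dvd (by linarith) hd
  obtain rfl | rfl : i = 2 ∨ i = 3 := by
    have : i ≤ 3 := by nlinarith
    omega
  · exact absurd hd (not_two_mul_add_one_dvd (by linarith))
  · exact ⟨rfl, eq_five_of_three_mul_add_one_dvd hik hd⟩

/-- Let `i, k` be coprime integers with `2 ≤ i < k`. If `2k + 2i ≡ 0 (mod ik + 1)`,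
then `i = 3` and `k = 5`. -/
theorem stmt_17 (i k : ℤ) (hcop : IsCoprime i k) (hi : 2 ≤ i) (hik : i < k)
    (h : 2 * k + 2 * i ≡ 0 [ZMOD i * k + 1]) : i = 3 ∧ k = 5 :=
  stmt_17_general i k hi hik h
end
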